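/- arXiv:2507.00651 — 2 statements merged into one kernel-verified Lean document; each statement's English description precedes it below -/
import Mathlib

section
/- Variational lower bound for f-divergences: for any measurable function T: X → dom(f*), D_f(P||Q) ≥ E_P[T(x)] − E_Q[f*(T(x))], where f* is the convex conjugate of f; equality is attained when T(x) = f'(dP/dQ(x)) (for differentiable f), so D_f(P||Q) = sup_T (E_P[T] − E_Q[f*∘T]). -/
open MeasureTheory

lemma tangent_aux {f : ℝ → ℝ} (hf : ConvexOn ℝ (Set.Ioi (0:ℝ)) f) {v u : ℝ}
    (hv : 0 < v) (hu : 0 < u) (hd : DifferentiableAt ℝ f v) :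
    u * deriv f v - f u ≤ v * deriv f v - f v := by
  rcases lt_trichotomy u v with h | h | h
  · have h1 := hf.slope_le_deriv (Set.mem_Ioi.2 hu) (Set.mem_Ioi.2 hv) h hd
    rw [slope_def_field] at h1
    have h2 : f v - f u ≤ deriv f v * (v - u) := by
      rw [div_le_iff₀ (by linarith)] at h1; linarith
    nlinarith
  · simp [h]
  · have h1 := hf.deriv_le_slope (Set.mem_Ioi.2 hv) (Set.mem_Ioi.2 hu) h hd
    rw [slope_def_field] at h1
    have h2 : deriv f v * (u - v) ≤ f u - f v := by
      rw [le_div_iff₀ (by linarith)] at h1; linarith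
    nlinarith

lemma bddAbove_aux {f : ℝ → ℝ} (hf : ConvexOn ℝ (Set.Ioi (0:ℝ)) f) {v : ℝ}
    (hv : 0 < v) (hd : DifferentiableAt ℝ f v) :
    BddAbove ((fun u => u * deriv f v - f u) '' Set.Ioi (0 : ℝ)) := by
  refine ⟨v * deriv f v - f v, ?_⟩
  rintro b ⟨u, hu, rfl⟩
  exact tangent_aux hf hv hu hd

lemma sSup_aux {f : ℝ → ℝ} (hf : ConvexOn ℝ (Set.Ioi (0:ℝ)) f) {v : ℝ}
    (hv : 0 < v) (hd : DifferentiableAt ℝ f v) :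
    sSup ((fun u => u * deriv f v - f u) '' Set.Ioi (0 : ℝ))
      = v * deriv f v - f v := by
  apply le_antisymm
  · refine csSup_le ((Set.nonempty_Ioi).image _) ?_
    rintro b ⟨u, hu, rfl⟩
    exact tangent_aux hf hv hu hd
  · exact le_csSup (bddAbove_aux hf hv hd) ⟨v, hv, rfl⟩

/-- Variational (Donsker–Varadhan / Nguyen–Wainwright–Jordan style) characterization
of f-divergences: for any measurable `T` with values in the domain of the convex
conjugate `f*`, `D_f(P‖Q) ≥ E_P[T] - E_Q[f* ∘ T]`; for differentiable `f`, equality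
is attained at `T = f' ∘ (dP/dQ)`, hence `D_f(P‖Q) = sup_T (E_P[T] - E_Q[f* ∘ T])`. -/
theorem fDivergence_variational_bound
    {X : Type*} [MeasurableSpace X] (f : ℝ → ℝ)
    (hf : ConvexOn ℝ (Set.Ioi (0 : ℝ)) f) (hlsc : LowerSemicontinuous f)
    (hf1 : f 1 = 0)
    (P Q : Measure X) [IsProbabilityMeasure P] [IsProbabilityMeasure Q]
    (hPQ : P ≪ Q)
    (ρ : X → ℝ) (hρ : ρ = fun x => (P.rnDeriv Q x).toReal)
    (hρpos : ∀ᵐ x ∂Q, 0 < ρ x)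
    (fstar : ℝ → ℝ)
    (hfstar : ∀ t, fstar t = sSup ((fun u => u * t - f u) '' Set.Ioi (0 : ℝ)))
    (hDint : Integrable (fun x => f (ρ x)) Q) :
    (∀ T : X → ℝ, Measurable T →
        (∀ x, BddAbove ((fun u => u * T x - f u) '' Set.Ioi (0 : ℝ))) →
        Integrable T P → Integrable (fun x => fstar (T x)) Q →
        (∫ x, T x ∂P) - (∫ x, fstar (T x) ∂Q) ≤ ∫ x, f (ρ x) ∂Q) ∧
      (DifferentiableOn ℝ f (Set.Ioi (0 : ℝ)) →
        Integrable (fun x => deriv f (ρ x)) P →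
        Integrable (fun x => fstar (deriv f (ρ x))) Q →
        (∫ x, f (ρ x) ∂Q) =
          (∫ x, deriv f (ρ x) ∂P) - ∫ x, fstar (deriv f (ρ x)) ∂Q) ∧
      (DifferentiableOn ℝ f (Set.Ioi (0 : ℝ)) →
        Integrable (fun x => deriv f (ρ x)) P →
        Integrable (fun x => fstar (deriv f (ρ x))) Q →
        (∫ x, f (ρ x) ∂Q) =
          sSup {r : ℝ | ∃ T : X → ℝ, Measurable T ∧
            (∀ x, BddAbove ((fun u => u * T x - f u) '' Set.Ioi (0 : ℝ))) ∧
            Integrable T P ∧ Integrable (fun x => fstar (T x)) Q ∧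
            r = (∫ x, T x ∂P) - ∫ x, fstar (T x) ∂Q}) := by
  have hmeasρ : Measurable ρ := by
    rw [hρ]; exact (Measure.measurable_rnDeriv P Q).ennreal_toReal
  -- integral transfer
  have key : ∀ g : X → ℝ, Integrable g P →
      ∫ x, ρ x * g x ∂Q = ∫ x, g x ∂P := by
    intro g hg
    rw [hρ]
    simpa [smul_eq_mul] using MeasureTheory.integral_rnDeriv_smul hPQ (f := g)
  have keyInt : ∀ g : X → ℝ, Integrable g P →
      Integrable (fun x => ρ x * g x) Q := by
    intro g hg
    rw [hρ]
    simpa [smul_eq_mul] using (MeasureTheory.integrable_rnDeriv_smul_iff hPQ (f := g)).2 hg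
  -- Part 1
  have part1 : ∀ T : X → ℝ, Measurable T →
      (∀ x, BddAbove ((fun u => u * T x - f u) '' Set.Ioi (0 : ℝ))) →
      Integrable T P → Integrable (fun x => fstar (T x)) Q →
      (∫ x, T x ∂P) - (∫ x, fstar (T x) ∂Q) ≤ ∫ x, f (ρ x) ∂Q := by
    intro T hTmeas hTbdd hTP hTQ
    have hpt : ∀ᵐ x ∂Q, ρ x * T x - f (ρ x) ≤ fstar (T x) := by
      filter_upwards [hρpos] with x hx
      rw [hfstar]
      exact le_csSup (hTbdd x) ⟨ρ x, hx, rfl⟩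
    have hInt1 : Integrable (fun x => ρ x * T x) Q := keyInt T hTP
    have h2 : ∫ x, (ρ x * T x - f (ρ x)) ∂Q ≤ ∫ x, fstar (T x) ∂Q :=
      integral_mono_ae (hInt1.sub hDint) hTQ hpt
    rw [integral_sub hInt1 hDint, key T hTP] at h2
    linarith
  -- Part 2
  have part2 : DifferentiableOn ℝ f (Set.Ioi (0 : ℝ)) →
      Integrable (fun x => deriv f (ρ x)) P →
      Integrable (fun x => fstar (deriv f (ρ x))) Q →
      (∫ x, f (ρ x) ∂Q) =
        (∫ x, deriv f (ρ x) ∂P) - ∫ x, fstar (deriv f (ρ x)) ∂Q := by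
    intro hdiff hIP hIQ
    have heq : ∀ᵐ x ∂Q, fstar (deriv f (ρ x)) = ρ x * deriv f (ρ x) - f (ρ x) := by
      filter_upwards [hρpos] with x hx
      have hdAt : DifferentiableAt ℝ f (ρ x) :=
        (hdiff (ρ x) hx).differentiableAt (isOpen_Ioi.mem_nhds hx)
      rw [hfstar]
      exact sSup_aux hf hx hdAt
    have hInt1 : Integrable (fun x => ρ x * deriv f (ρ x)) Q :=
      keyInt _ hIP
    have := integral_congr_ae heq
    rw [integral_sub hInt1 hDint, key _ hIP] at this
    linarith
  refine ⟨part1, part2, ?_⟩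
  -- Part 3
  intro hdiff hIP hIQ
  set T' : X → ℝ := fun x => if 0 < ρ x then deriv f (ρ x) else deriv f 1 with hT'
  have hT'meas : Measurable T' :=
    Measurable.ite (measurableSet_lt measurable_const hmeasρ)
      ((measurable_deriv f).comp hmeasρ) measurable_const
  have hd1 : DifferentiableAt ℝ f 1 :=
    (hdiff 1 (by norm_num)).differentiableAt (isOpen_Ioi.mem_nhds (by norm_num))
  have hT'bdd : ∀ x, BddAbove ((fun u => u * T' x - f u) '' Set.Ioi (0 : ℝ)) := by
    intro x
    rw [hT']
    by_cases h : 0 < ρ x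
    · simp only [if_pos h]
      exact bddAbove_aux hf h
        ((hdiff (ρ x) h).differentiableAt (isOpen_Ioi.mem_nhds h))
    · simp only [if_neg h]
      exact bddAbove_aux hf one_pos hd1
  have hT'eqQ : T' =ᵐ[Q] fun x => deriv f (ρ x) := by
    filter_upwards [hρpos] with x hx
    rw [hT']; simp [hx]
  have hT'eqP : T' =ᵐ[P] fun x => deriv f (ρ x) := hPQ.ae_le hT'eqQ
  have hfT'eqQ : (fun x => fstar (T' x)) =ᵐ[Q] fun x => fstar (deriv f (ρ x)) := by
    filter_upwards [hT'eqQ] with x hx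
    rw [hx]
  have hT'P : Integrable T' P := hIP.congr hT'eqP.symm
  have hT'Q : Integrable (fun x => fstar (T' x)) Q := hIQ.congr hfT'eqQ.symm
  have hval : (∫ x, T' x ∂P) - ∫ x, fstar (T' x) ∂Q = ∫ x, f (ρ x) ∂Q := by
    rw [integral_congr_ae hT'eqP, integral_congr_ae hfT'eqQ]
    exact (part2 hdiff hIP hIQ).symm
  have hmem : (∫ x, f (ρ x) ∂Q) ∈ {r : ℝ | ∃ T : X → ℝ, Measurable T ∧
      (∀ x, BddAbove ((fun u => u * T x - f u) '' Set.Ioi (0 : ℝ))) ∧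
      Integrable T P ∧ Integrable (fun x => fstar (T x)) Q ∧
      r = (∫ x, T x ∂P) - ∫ x, fstar (T x) ∂Q} :=
    ⟨T', hT'meas, hT'bdd, hT'P, hT'Q, hval.symm⟩
  have hub : ∀ r ∈ {r : ℝ | ∃ T : X → ℝ, Measurable T ∧
      (∀ x, BddAbove ((fun u => u * T x - f u) '' Set.Ioi (0 : ℝ))) ∧
      Integrable T P ∧ Integrable (fun x => fstar (T x)) Q ∧
      r = (∫ x, T x ∂P) - ∫ x, fstar (T x) ∂Q}, r ≤ ∫ x, f (ρ x) ∂Q := by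
    rintro r ⟨T, hm, hb, h1, h2, rfl⟩
    exact part1 T hm hb h1 h2
  exact le_antisymm (le_csSup ⟨_, hub⟩ hmem) (csSup_le ⟨_, hmem⟩ hub)
end

section
/- The original GAN minimax objective equals the Jensen–Shannon divergence up to constants: for fixed densities π and p_ψ, sup over discriminators D: X → (0,1) of E_{π}[log D(x)] + E_{p_ψ}[log(1−D(x))] equals 2·JS(π || p_ψ) − 2 log 2, with the supremum attained at D*(x) = π(x)/(π(x)+p_ψ(x)). -/
open MeasureTheory

lemma gan_pointwise_aux (a b d : ℝ) (ha : 0 < a) (hb : 0 < b) (hd : 0 < d) (hd1 : d < 1) :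
    a * Real.log d + b * Real.log (1 - d) ≤
    a * Real.log (a / (a + b)) + b * Real.log (b / (a + b)) := by
  have hs : 0 < a + b := by linarith
  have h1d : 0 < 1 - d := by linarith
  have h1 : Real.log d - Real.log (a / (a + b)) = Real.log (d * (a + b) / a) := by
    rw [Real.log_div (by positivity) (by positivity),
      Real.log_div (by positivity) (by positivity),
      Real.log_mul (by positivity) (by positivity)]
    ring
  have h2 : Real.log (1 - d) - Real.log (b / (a + b)) = Real.log ((1 - d) * (a + b) / b) := by
    rw [Real.log_div (by positivity) (by positivity),
      Real.log_div (by positivity) (by positivity),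
      Real.log_mul (by positivity) (by positivity)]
    ring
  have l1 : Real.log (d * (a + b) / a) ≤ d * (a + b) / a - 1 :=
    Real.log_le_sub_one_of_pos (by positivity)
  have l2 : Real.log ((1 - d) * (a + b) / b) ≤ (1 - d) * (a + b) / b - 1 :=
    Real.log_le_sub_one_of_pos (by positivity)
  have k1 : a * Real.log d - a * Real.log (a / (a + b)) ≤ d * (a + b) - a := by
    calc a * Real.log d - a * Real.log (a / (a + b))
        = a * (Real.log d - Real.log (a / (a + b))) := by ring
      _ = a * Real.log (d * (a + b) / a) := by rw [h1]
      _ ≤ a * (d * (a + b) / a - 1) := mul_le_mul_of_nonneg_left l1 ha.le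
      _ = d * (a + b) - a := by field_simp
  have k2 : b * Real.log (1 - d) - b * Real.log (b / (a + b)) ≤ (1 - d) * (a + b) - b := by
    calc b * Real.log (1 - d) - b * Real.log (b / (a + b))
        = b * (Real.log (1 - d) - Real.log (b / (a + b))) := by ring
      _ = b * Real.log ((1 - d) * (a + b) / b) := by rw [h2]
      _ ≤ b * ((1 - d) * (a + b) / b - 1) := mul_le_mul_of_nonneg_left l2 hb.le
      _ = (1 - d) * (a + b) - b := by field_simp
  have hsum : d * (a + b) + (1 - d) * (a + b) = a + b := by ring
  linarith

/-- The original GAN inner maximization equals the Jensen–Shannon divergence up to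
constants: `sup_D E_π[log D] + E_{p_ψ}[log(1-D)] = 2·JS(π‖p_ψ) - 2 log 2`, and the
supremum is attained at the optimal discriminator `D*(x) = π(x)/(π(x)+p_ψ(x))`. -/
theorem gan_sup_eq_two_js_sub_two_log_two
    {α : Type*} [MeasurableSpace α] (μ : Measure α) (pi0 p : α → ℝ)
    (hpimeas : Measurable pi0) (hpmeas : Measurable p)
    (hpi : ∀ x, 0 < pi0 x) (hp : ∀ x, 0 < p x)
    (hpiprob : ∫ x, pi0 x ∂μ = 1) (hpprob : ∫ x, p x ∂μ = 1)
    (hintp : Integrable (fun x => pi0 x * Real.log (pi0 x / ((pi0 x + p x) / 2))) μ)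
    (hintq : Integrable (fun x => p x * Real.log (p x / ((pi0 x + p x) / 2))) μ)
    (JS : ℝ)
    (hJS : JS = (1 / 2) * (∫ x, pi0 x * Real.log (pi0 x / ((pi0 x + p x) / 2)) ∂μ) +
      (1 / 2) * ∫ x, p x * Real.log (p x / ((pi0 x + p x) / 2)) ∂μ) :
    sSup {r : ℝ | ∃ D : α → ℝ, Measurable D ∧ (∀ x, D x ∈ Set.Ioo (0 : ℝ) 1) ∧
        Integrable (fun x => pi0 x * Real.log (D x)) μ ∧
        Integrable (fun x => p x * Real.log (1 - D x)) μ ∧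
        r = (∫ x, pi0 x * Real.log (D x) ∂μ) + ∫ x, p x * Real.log (1 - D x) ∂μ} =
      2 * JS - 2 * Real.log 2 ∧
    (∫ x, pi0 x * Real.log (pi0 x / (pi0 x + p x)) ∂μ) +
        (∫ x, p x * Real.log (1 - pi0 x / (pi0 x + p x)) ∂μ) =
      2 * JS - 2 * Real.log 2 := by
  have hs : ∀ x, 0 < pi0 x + p x := fun x => by have := hpi x; have := hp x; linarith
  have hpi_int : Integrable pi0 μ := by
    by_contra h
    rw [integral_undef h] at hpiprob
    norm_num at hpiprob
  have hp_int : Integrable p μ := by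
    by_contra h
    rw [integral_undef h] at hpprob
    norm_num at hpprob
  -- pointwise rewrites
  have hDstar1 : ∀ x, pi0 x * Real.log (pi0 x / (pi0 x + p x))
      = pi0 x * Real.log (pi0 x / ((pi0 x + p x) / 2)) - pi0 x * Real.log 2 := by
    intro x
    have : pi0 x / (pi0 x + p x) = (pi0 x / ((pi0 x + p x) / 2)) / 2 := by
      rw [div_div]; congr 1; ring
    rw [this, Real.log_div (ne_of_gt (div_pos (hpi x) (by linarith [hs x]))) (by norm_num)]
    ring
  have h1D : ∀ x, 1 - pi0 x / (pi0 x + p x) = p x / (pi0 x + p x) := by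
    intro x
    rw [eq_div_iff (hs x).ne', sub_mul, div_mul_cancel₀ _ (hs x).ne']
    ring
  have hDstar2 : ∀ x, p x * Real.log (1 - pi0 x / (pi0 x + p x))
      = p x * Real.log (p x / ((pi0 x + p x) / 2)) - p x * Real.log 2 := by
    intro x
    rw [h1D x]
    have : p x / (pi0 x + p x) = (p x / ((pi0 x + p x) / 2)) / 2 := by
      rw [div_div]; congr 1; ring
    rw [this, Real.log_div (ne_of_gt (div_pos (hp x) (by linarith [hs x]))) (by norm_num)]
    ring
  -- integrability of the optimal discriminator terms
  have hint1 : Integrable (fun x => pi0 x * Real.log (pi0 x / (pi0 x + p x))) μ := by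
    have : (fun x => pi0 x * Real.log (pi0 x / (pi0 x + p x)))
        = fun x => pi0 x * Real.log (pi0 x / ((pi0 x + p x) / 2)) - pi0 x * Real.log 2 := by
      funext x; exact hDstar1 x
    rw [this]
    exact hintp.sub (hpi_int.mul_const _)
  have hint2 : Integrable (fun x => p x * Real.log (1 - pi0 x / (pi0 x + p x))) μ := by
    have : (fun x => p x * Real.log (1 - pi0 x / (pi0 x + p x)))
        = fun x => p x * Real.log (p x / ((pi0 x + p x) / 2)) - p x * Real.log 2 := by
      funext x; exact hDstar2 x
    rw [this]
    exact hintq.sub (hp_int.mul_const _)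
  -- value of the objective at the optimal discriminator
  have hval : (∫ x, pi0 x * Real.log (pi0 x / (pi0 x + p x)) ∂μ) +
      (∫ x, p x * Real.log (1 - pi0 x / (pi0 x + p x)) ∂μ) = 2 * JS - 2 * Real.log 2 := by
    have e1 : (∫ x, pi0 x * Real.log (pi0 x / (pi0 x + p x)) ∂μ)
        = (∫ x, pi0 x * Real.log (pi0 x / ((pi0 x + p x) / 2)) ∂μ) - Real.log 2 := by
      calc (∫ x, pi0 x * Real.log (pi0 x / (pi0 x + p x)) ∂μ)
          = ∫ x, (pi0 x * Real.log (pi0 x / ((pi0 x + p x) / 2)) - pi0 x * Real.log 2) ∂μ := by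
            congr 1; funext x; exact hDstar1 x
        _ = (∫ x, pi0 x * Real.log (pi0 x / ((pi0 x + p x) / 2)) ∂μ)
            - ∫ x, pi0 x * Real.log 2 ∂μ := integral_sub hintp (hpi_int.mul_const _)
        _ = (∫ x, pi0 x * Real.log (pi0 x / ((pi0 x + p x) / 2)) ∂μ) - Real.log 2 := by
            rw [integral_mul_const, hpiprob, one_mul]
    have e2 : (∫ x, p x * Real.log (1 - pi0 x / (pi0 x + p x)) ∂μ)
        = (∫ x, p x * Real.log (p x / ((pi0 x + p x) / 2)) ∂μ) - Real.log 2 := by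
      calc (∫ x, p x * Real.log (1 - pi0 x / (pi0 x + p x)) ∂μ)
          = ∫ x, (p x * Real.log (p x / ((pi0 x + p x) / 2)) - p x * Real.log 2) ∂μ := by
            congr 1; funext x; exact hDstar2 x
        _ = (∫ x, p x * Real.log (p x / ((pi0 x + p x) / 2)) ∂μ)
            - ∫ x, p x * Real.log 2 ∂μ := integral_sub hintq (hp_int.mul_const _)
        _ = (∫ x, p x * Real.log (p x / ((pi0 x + p x) / 2)) ∂μ) - Real.log 2 := by
            rw [integral_mul_const, hpprob, one_mul]
    rw [e1, e2, hJS]; ring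
  constructor
  · -- the sSup part
    apply IsGreatest.csSup_eq
    constructor
    · -- membership: optimal discriminator
      refine ⟨fun x => pi0 x / (pi0 x + p x), hpimeas.div (hpimeas.add hpmeas), ?_, hint1, hint2, hval.symm⟩
      intro x
      constructor
      · exact div_pos (hpi x) (hs x)
      · rw [div_lt_one (hs x)]
        have := hp x; linarith
    · -- upper bound
      rintro r ⟨D, hDmeas, hDmem, hI1, hI2, rfl⟩
      rw [← hval]
      have key : ∀ x, pi0 x * Real.log (D x) + p x * Real.log (1 - D x) ≤
          pi0 x * Real.log (pi0 x / (pi0 x + p x)) +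
          p x * Real.log (1 - pi0 x / (pi0 x + p x)) := by
        intro x
        rw [h1D x]
        exact gan_pointwise_aux (pi0 x) (p x) (D x) (hpi x) (hp x) (hDmem x).1 (hDmem x).2
      calc (∫ x, pi0 x * Real.log (D x) ∂μ) + ∫ x, p x * Real.log (1 - D x) ∂μ
          = ∫ x, (pi0 x * Real.log (D x) + p x * Real.log (1 - D x)) ∂μ :=
            (integral_add hI1 hI2).symm
        _ ≤ ∫ x, (pi0 x * Real.log (pi0 x / (pi0 x + p x)) +
              p x * Real.log (1 - pi0 x / (pi0 x + p x))) ∂μ :=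
            integral_mono (hI1.add hI2) (hint1.add hint2) key
        _ = (∫ x, pi0 x * Real.log (pi0 x / (pi0 x + p x)) ∂μ) +
              ∫ x, p x * Real.log (1 - pi0 x / (pi0 x + p x)) ∂μ :=
            integral_add hint1 hint2
  · exact hval
end
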